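/- Let δ ≥ 1 and κ, n > 0, and define Φ : (0,∞) → (0,∞) by Φ(r) = ((κn)^{1/δ}/(2κ)) · ∫_{(κn)^{1/δ}/r}^{∞} v^{δ−2}/(v^{δ}+1) dv. Then: (a) Φ is finite-valued, differentiable with Φ'(r) = n/(2(κn + r^{δ})) for all r > 0, strictly increasing, and concave; (b) Φ is bounded on (0,∞) if and only if δ > 1; (c) ∫₀^∞ Φ(s²)/s² ds < ∞. Moreover, for every r > 0 one has ∫₀^∞ ( κn / ( e^{2δκt}·(1 + κn/r^{δ}) − 1 ) )^{1/δ} dt = Φ(r). -/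

import Mathlib

/-!
Write `a = (κn)^{1/δ}` and `f v = v^{δ-2}/(v^δ+1)`. Since `f v ≤ v⁻²`, the tails `∫_c^∞ f`
are finite and at most `1/c`, so `Φ r ≤ r/(2κ)`. Differentiating in the lower limit `a/r`
gives `Φ' r = n/(2(κn + r^δ))`, positive and decreasing, hence `Φ` is strictly increasing and
concave. For `r ≥ 1` this derivative is at most `n/(2r)`, so `Φ` grows at most
logarithmically, which makes `Φ(s²)/s²` integrable at infinity. When `δ = 1` it is also at
least `n/(2(κn+1)r)`, so `Φ` is unbounded; when `δ > 1`, `f` is integrable at `0` and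
`Φ ≤ a/(2κ) ∫_0^∞ f`. Finally the time integral becomes `Φ r` under the substitution
`t = log((v^δ+1)/(1+(a/r)^δ)) / (2δκ)`.
-/

open Real Filter MeasureTheory Set

lemma sub_le_sub_of_hasDerivAt_le {f g f' g' : ℝ → ℝ} {a b : ℝ} (hab : a ≤ b)
    (hf : ∀ x ∈ Icc a b, HasDerivAt f (f' x) x) (hg : ∀ x ∈ Icc a b, HasDerivAt g (g' x) x)
    (hle : ∀ x ∈ Ioo a b, f' x ≤ g' x) : f b - f a ≤ g b - g a := by
  have hderiv : ∀ x ∈ Icc a b, HasDerivAt (g - f) ((g' - f') x) x :=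
    fun x hx => (hg x hx).sub (hf x hx)
  have hmono : MonotoneOn (g - f) (Icc a b) := by
    refine monotoneOn_of_hasDerivWithinAt_nonneg (f' := g' - f') (convex_Icc a b)
      (fun x hx => (hderiv x hx).continuousAt.continuousWithinAt) ?_ ?_ <;> rw [interior_Icc]
    · exact fun x hx => (hderiv x (Ioo_subset_Icc_self hx)).hasDerivWithinAt
    · exact fun x hx => sub_nonneg.2 (hle x hx)
  have := hmono (left_mem_Icc.2 hab) (right_mem_Icc.2 hab) hab
  simp only [Pi.sub_apply] at this
  linarith

lemma hasDerivAt_integral_Ioi {f : ℝ → ℝ} {a c : ℝ} (hf : IntegrableOn f (Ioi a))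
    (hac : a < c) (hfc : ContinuousAt f c) :
    HasDerivAt (fun x => ∫ t in Ioi x, f t) (-f c) c := by
  have hright : HasDerivAt (fun x => ∫ t in a..x, f t) (f c) c :=
    intervalIntegral.integral_hasDerivAt_right
      ((intervalIntegrable_iff_integrableOn_Ioc_of_le hac.le).2 (hf.mono_set Ioc_subset_Ioi_self))
      (AEStronglyMeasurable.stronglyMeasurableAtFilter_of_mem hf.aestronglyMeasurable
        (Ioi_mem_nhds hac)) hfc
  refine (((hasDerivAt_const c (∫ t in Ioi a, f t)).sub hright).congr_of_eventuallyEq ?_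
    ).congr_deriv (zero_sub _)
  filter_upwards [Ioi_mem_nhds hac] with x hx
  simp only [Pi.sub_apply]
  rw [← intervalIntegral.integral_Ioi_sub_Ioi hf (le_of_lt hx), sub_sub_cancel]

lemma setIntegral_Ioi_pos {f : ℝ → ℝ} {c : ℝ} (hf : IntegrableOn f (Ioi c))
    (hpos : ∀ x ∈ Ioi c, 0 < f x) : 0 < ∫ x in Ioi c, f x := by
  rw [setIntegral_pos_iff_support_of_nonneg_ae
    ((ae_restrict_mem measurableSet_Ioi).mono fun x hx => (hpos x hx).le) hf,
    (inter_eq_right.2 fun x hx => (hpos x hx).ne' : Function.support f ∩ Ioi c = Ioi c),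
    volume_Ioi]
  exact ENNReal.zero_lt_top

lemma integrableOn_Ioi_zero_of_le {g : ℝ → ℝ} {C₀ C₁ p : ℝ} (hp : p < -1)
    (hg : ContinuousOn g (Ioi 0)) (h0 : ∀ s ∈ Ioc 0 1, ‖g s‖ ≤ C₀)
    (h1 : ∀ s ∈ Ioi 1, ‖g s‖ ≤ C₁ * s ^ p) : IntegrableOn g (Ioi 0) := by
  rw [← Ioc_union_Ioi_eq_Ioi zero_le_one]
  refine IntegrableOn.union ?_ ?_
  · exact Integrable.mono' (integrableOn_const measure_Ioc_lt_top.ne)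
      ((hg.mono Ioc_subset_Ioi_self).aestronglyMeasurable measurableSet_Ioc)
      ((ae_restrict_mem measurableSet_Ioc).mono h0)
  · exact Integrable.mono' ((integrableOn_Ioi_rpow_of_lt hp one_pos).const_mul C₁)
      ((hg.mono (Ioi_subset_Ioi zero_le_one)).aestronglyMeasurable measurableSet_Ioi)
      ((ae_restrict_mem measurableSet_Ioi).mono h1)

section Integrand

variable {δ : ℝ}

lemma continuousOn_integrand : ContinuousOn (fun v : ℝ => v ^ (δ - 2) / (v ^ δ + 1)) (Ioi 0) :=
  ((continuousOn_id.rpow_const fun _ hv => Or.inl (ne_of_gt hv)).div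
    ((continuousOn_id.rpow_const fun _ hv => Or.inl (ne_of_gt hv)).add continuousOn_const))
    fun _ hv => (add_pos (rpow_pos_of_pos hv δ) one_pos).ne'

lemma integrand_pos {v : ℝ} (hv : 0 < v) : 0 < v ^ (δ - 2) / (v ^ δ + 1) := by positivity

lemma integrand_le_rpow_neg_two {v : ℝ} (hv : 0 < v) :
    v ^ (δ - 2) / (v ^ δ + 1) ≤ v ^ (-2 : ℝ) := by
  rw [show (-2 : ℝ) = δ - 2 - δ by ring, rpow_sub hv (δ - 2) δ]
  exact div_le_div_of_nonneg_left (by positivity) (by positivity) (by linarith)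

lemma integrand_le_rpow {v : ℝ} (hv : 0 < v) : v ^ (δ - 2) / (v ^ δ + 1) ≤ v ^ (δ - 2) :=
  div_le_self (by positivity) (by linarith [rpow_pos_of_pos hv δ])

lemma integrableOn_integrand_Ioi {c : ℝ} (hc : 0 < c) :
    IntegrableOn (fun v : ℝ => v ^ (δ - 2) / (v ^ δ + 1)) (Ioi c) :=
  Integrable.mono' (integrableOn_Ioi_rpow_of_lt (by norm_num : (-2 : ℝ) < -1) hc)
    ((continuousOn_integrand.mono (Ioi_subset_Ioi hc.le)).aestronglyMeasurable measurableSet_Ioi)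
    ((ae_restrict_mem measurableSet_Ioi).mono fun v hv => by
      rw [norm_of_nonneg (integrand_pos (hc.trans hv)).le]
      exact integrand_le_rpow_neg_two (hc.trans hv))

lemma integral_integrand_Ioi_le_inv {c : ℝ} (hc : 0 < c) :
    ∫ v in Ioi c, v ^ (δ - 2) / (v ^ δ + 1) ≤ c⁻¹ := by
  calc ∫ v in Ioi c, v ^ (δ - 2) / (v ^ δ + 1) ≤ ∫ v in Ioi c, v ^ (-2 : ℝ) :=
        setIntegral_mono_on (integrableOn_integrand_Ioi hc)
          (integrableOn_Ioi_rpow_of_lt (by norm_num : (-2 : ℝ) < -1) hc) measurableSet_Ioi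
          fun v hv => integrand_le_rpow_neg_two (hc.trans hv)
    _ = c⁻¹ := by
        rw [integral_Ioi_rpow_of_lt (by norm_num) hc]
        norm_num [rpow_neg_one]

lemma integrableOn_integrand_Ioi_zero (hδ : 1 < δ) :
    IntegrableOn (fun v : ℝ => v ^ (δ - 2) / (v ^ δ + 1)) (Ioi 0) := by
  rw [← Ioc_union_Ioi_eq_Ioi zero_le_one]
  refine IntegrableOn.union ?_ (integrableOn_integrand_Ioi one_pos)
  have hpow : IntegrableOn (fun v : ℝ => v ^ (δ - 2)) (Ioc 0 1) :=
    (intervalIntegrable_iff_integrableOn_Ioc_of_le zero_le_one).1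
      (intervalIntegral.intervalIntegrable_rpow' (by linarith))
  exact Integrable.mono' hpow
    ((continuousOn_integrand.mono Ioc_subset_Ioi_self).aestronglyMeasurable measurableSet_Ioc)
    ((ae_restrict_mem measurableSet_Ioc).mono fun v hv => by
      rw [norm_of_nonneg (integrand_pos hv.1).le]
      exact integrand_le_rpow hv.1)

end Integrand

section Substitution

variable {δ μ c v : ℝ}

noncomputable def logSubst (δ μ c v : ℝ) : ℝ := (log (v ^ δ + 1) - log (1 + c ^ δ)) / μ

lemma exp_mul_logSubst (hμ : μ ≠ 0) (hc : 0 ≤ c) (hv : 0 ≤ v) :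
    exp (μ * logSubst δ μ c v) * (1 + c ^ δ) = v ^ δ + 1 := by
  rw [logSubst, mul_div_cancel₀ _ hμ, exp_sub, exp_log (by positivity), exp_log (by positivity),
    div_mul_cancel₀ _ (by positivity)]

lemma hasDerivAt_logSubst (hv : 0 < v) :
    HasDerivAt (logSubst δ μ c) (δ * v ^ (δ - 1) / (v ^ δ + 1) / μ) v :=
  ((((hasDerivAt_rpow_const (p := δ) (Or.inl hv.ne')).add_const 1).log
    (by positivity)).sub_const _).div_const μ

lemma strictMonoOn_logSubst (hδ : 0 < δ) (hμ : 0 < μ) :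
    StrictMonoOn (logSubst δ μ c) (Ici 0) :=
  fun x hx y _ hxy => div_lt_div_of_pos_right (sub_lt_sub_right (log_lt_log (by
    have : (0 : ℝ) ≤ x := hx
    positivity) (by gcongr)) _) hμ

lemma image_logSubst_Ioi (hδ : 0 < δ) (hμ : 0 < μ) (hc : 0 < c) :
    logSubst δ μ c '' Ioi c = Ioi 0 := by
  ext t
  constructor
  · rintro ⟨v, hv, rfl⟩
    have hself : logSubst δ μ c c = 0 := by simp [logSubst, add_comm]
    rw [mem_Ioi, ← hself]
    exact strictMonoOn_logSubst hδ hμ hc.le (hc.trans hv).le hv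
  · intro ht
    have hcδ : c ^ δ < exp (μ * t) * (1 + c ^ δ) - 1 := by
      have : 1 < exp (μ * t) := one_lt_exp_iff.2 (mul_pos hμ ht)
      nlinarith [rpow_pos_of_pos hc δ]
    have hw : 0 ≤ exp (μ * t) * (1 + c ^ δ) - 1 := (rpow_pos_of_pos hc δ).le.trans hcδ.le
    refine ⟨(exp (μ * t) * (1 + c ^ δ) - 1) ^ (1 / δ), ?_, ?_⟩
    · rw [mem_Ioi, ← rpow_lt_rpow_iff hc.le (by positivity) hδ, one_div,
        rpow_inv_rpow hw hδ.ne']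
      exact hcδ
    · rw [logSubst, one_div, rpow_inv_rpow hw hδ.ne', sub_add_cancel,
        log_mul (exp_pos _).ne' (by positivity), log_exp]
      field_simp
      ring

lemma abs_deriv_logSubst_mul {A : ℝ} (hδ : 0 < δ) (hμ : 0 < μ) (hA : 0 ≤ A) (hc : 0 ≤ c)
    (hv : 0 < v) :
    |δ * v ^ (δ - 1) / (v ^ δ + 1) / μ| *
        (A / (exp (μ * logSubst δ μ c v) * (1 + c ^ δ) - 1)) ^ (1 / δ)
      = A ^ (1 / δ) * δ / μ * (v ^ (δ - 2) / (v ^ δ + 1)) := by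
  rw [exp_mul_logSubst hμ.ne' hc hv.le, add_sub_cancel_right, div_rpow hA (by positivity),
    one_div, rpow_rpow_inv hv.le hδ.ne', abs_of_pos (by positivity),
    show δ - 2 = δ - 1 - 1 by ring, rpow_sub_one hv.ne' (δ - 1)]
  field_simp

lemma integral_rpow_div_exp_mul_sub_one {A : ℝ} (hδ : 0 < δ) (hμ : 0 < μ) (hA : 0 ≤ A)
    (hc : 0 < c) :
    IntegrableOn (fun t => (A / (exp (μ * t) * (1 + c ^ δ) - 1)) ^ (1 / δ)) (Ioi 0) ∧
      ∫ t in Ioi 0, (A / (exp (μ * t) * (1 + c ^ δ) - 1)) ^ (1 / δ)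
        = A ^ (1 / δ) * δ / μ * ∫ v in Ioi c, v ^ (δ - 2) / (v ^ δ + 1) := by
  have hderiv : ∀ v ∈ Ioi c, HasDerivWithinAt (logSubst δ μ c)
      (δ * v ^ (δ - 1) / (v ^ δ + 1) / μ) (Ioi c) v :=
    fun v hv => (hasDerivAt_logSubst (hc.trans hv)).hasDerivWithinAt
  have hinj : InjOn (logSubst δ μ c) (Ioi c) :=
    ((strictMonoOn_logSubst hδ hμ).mono fun v hv => (hc.trans hv).le).injOn
  have hsubst : EqOn
      (fun v => |δ * v ^ (δ - 1) / (v ^ δ + 1) / μ| •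
        (A / (exp (μ * logSubst δ μ c v) * (1 + c ^ δ) - 1)) ^ (1 / δ))
      (fun v => A ^ (1 / δ) * δ / μ * (v ^ (δ - 2) / (v ^ δ + 1))) (Ioi c) :=
    fun v hv => abs_deriv_logSubst_mul hδ hμ hA hc.le (hc.trans hv)
  rw [← image_logSubst_Ioi hδ hμ hc]
  refine ⟨(integrableOn_image_iff_integrableOn_abs_deriv_smul measurableSet_Ioi hderiv hinj _).2
    (IntegrableOn.congr_fun ((integrableOn_integrand_Ioi hc).const_mul _) hsubst.symm
      measurableSet_Ioi), ?_⟩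
  rw [integral_image_eq_integral_abs_deriv_smul measurableSet_Ioi hderiv hinj,
    setIntegral_congr_fun measurableSet_Ioi hsubst, integral_const_mul]

end Substitution

section GrowthFunction

variable {δ κ n r : ℝ}

noncomputable def growthFun (δ κ n r : ℝ) : ℝ :=
  (κ * n) ^ (1 / δ) / (2 * κ) *
    ∫ v in Ioi ((κ * n) ^ (1 / δ) / r), v ^ (δ - 2) / (v ^ δ + 1)

lemma growthFun_pos (hκ : 0 < κ) (hn : 0 < n) (hr : 0 < r) : 0 < growthFun δ κ n r :=
  mul_pos (by positivity) (setIntegral_Ioi_pos (integrableOn_integrand_Ioi (by positivity))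
    fun _ hv => integrand_pos (lt_trans (by positivity) hv))

lemma growthFun_le_div (hκ : 0 < κ) (hn : 0 < n) (hr : 0 < r) :
    growthFun δ κ n r ≤ r / (2 * κ) := by
  have ha : 0 < (κ * n) ^ (1 / δ) := by positivity
  calc growthFun δ κ n r ≤ (κ * n) ^ (1 / δ) / (2 * κ) * ((κ * n) ^ (1 / δ) / r)⁻¹ :=
        mul_le_mul_of_nonneg_left (integral_integrand_Ioi_le_inv (by positivity)) (by positivity)
    _ = r / (2 * κ) := by field_simp

lemma hasDerivAt_growthFun (hδ : 0 < δ) (hκ : 0 < κ) (hn : 0 < n) (hr : 0 < r) :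
    HasDerivAt (growthFun δ κ n) (n / (2 * (κ * n + r ^ δ))) r := by
  set a := (κ * n) ^ (1 / δ) with ha_def
  have ha : 0 < a := by positivity
  have haδ : a ^ δ = κ * n := by rw [ha_def, one_div, rpow_inv_rpow (by positivity) hδ.ne']
  have hc : 0 < a / r := div_pos ha hr
  have htail := hasDerivAt_integral_Ioi (integrableOn_integrand_Ioi (δ := δ) (half_pos hc))
    (half_lt_self hc) (continuousOn_integrand.continuousAt (Ioi_mem_nhds hc))
  have hinner : HasDerivAt (fun s => a / s) (-(a / r ^ 2)) r := by
    simpa [div_eq_mul_inv] using (hasDerivAt_inv hr.ne').const_mul a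
  refine ((htail.comp r hinner).const_mul (a / (2 * κ))).congr_deriv ?_
  rw [rpow_sub hc, rpow_two, div_rpow ha.le hr.le, haδ]
  field_simp

lemma strictMonoOn_growthFun (hδ : 0 < δ) (hκ : 0 < κ) (hn : 0 < n) :
    StrictMonoOn (growthFun δ κ n) (Ioi 0) := by
  refine strictMonoOn_of_hasDerivWithinAt_pos (f' := fun r => n / (2 * (κ * n + r ^ δ)))
    (convex_Ioi 0)
    (fun r hr => (hasDerivAt_growthFun hδ hκ hn hr).continuousAt.continuousWithinAt) ?_ ?_ <;>
    rw [interior_Ioi]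
  · exact fun r hr => (hasDerivAt_growthFun hδ hκ hn hr).hasDerivWithinAt
  · exact fun r hr => by have : (0 : ℝ) < r := hr; positivity

lemma concaveOn_growthFun (hδ : 0 < δ) (hκ : 0 < κ) (hn : 0 < n) :
    ConcaveOn ℝ (Ioi 0) (growthFun δ κ n) := by
  have hderiv := fun r (hr : r ∈ Ioi (0 : ℝ)) => hasDerivAt_growthFun hδ hκ hn hr
  refine AntitoneOn.concaveOn_of_deriv (convex_Ioi 0)
    (fun r hr => (hderiv r hr).continuousAt.continuousWithinAt) ?_ ?_ <;> rw [interior_Ioi]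
  · exact fun r hr => (hderiv r hr).differentiableAt.differentiableWithinAt
  · intro x hx y hy hxy
    have : (0 : ℝ) < x := hx
    rw [(hderiv x hx).deriv, (hderiv y hy).deriv]
    gcongr

lemma growthFun_le_add_log (hδ : 1 ≤ δ) (hκ : 0 < κ) (hn : 0 < n) (hr : 1 ≤ r) :
    growthFun δ κ n r ≤ growthFun δ κ n 1 + n / 2 * log r := by
  have hincr := sub_le_sub_of_hasDerivAt_le hr (g := fun r => n / 2 * log r)
    (fun x hx => hasDerivAt_growthFun (one_pos.trans_le hδ) hκ hn (one_pos.trans_le hx.1))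
    (fun x hx => (hasDerivAt_log (one_pos.trans_le hx.1).ne').const_mul (n / 2))
    fun x hx => by
      have hx1 : 1 ≤ x := hx.1.le
      calc n / (2 * (κ * n + x ^ δ)) ≤ n / (2 * x) := by
            gcongr
            linarith [self_le_rpow_of_one_le hx1 hδ, mul_pos hκ hn]
        _ = n / 2 * x⁻¹ := by ring
  simp only [log_one, mul_zero] at hincr
  linarith

lemma add_log_le_growthFun_one (hκ : 0 < κ) (hn : 0 < n) (hr : 1 ≤ r) :
    growthFun 1 κ n 1 + n / (2 * (κ * n + 1)) * log r ≤ growthFun 1 κ n r := by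
  have hincr := sub_le_sub_of_hasDerivAt_le hr (f := fun r => n / (2 * (κ * n + 1)) * log r)
    (fun x hx => (hasDerivAt_log (one_pos.trans_le hx.1).ne').const_mul _)
    (fun x hx => hasDerivAt_growthFun one_pos hκ hn (one_pos.trans_le hx.1))
    fun x hx => by
      have hx1 : 1 ≤ x := hx.1.le
      rw [rpow_one]
      calc n / (2 * (κ * n + 1)) * x⁻¹ = n / (2 * ((κ * n + 1) * x)) := by field_simp
        _ ≤ n / (2 * (κ * n + x)) := by
            gcongr
            nlinarith [mul_pos hκ hn]
  simp only [log_one, mul_zero] at hincr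
  linarith

lemma not_exists_bound_growthFun_one (hκ : 0 < κ) (hn : 0 < n) :
    ¬ ∃ C, ∀ r, 0 < r → growthFun 1 κ n r ≤ C := by
  rintro ⟨C, hC⟩
  have hlog : Tendsto (fun r => growthFun 1 κ n 1 + n / (2 * (κ * n + 1)) * log r) atTop atTop :=
    tendsto_atTop_add_const_left _ _ (tendsto_log_atTop.const_mul_atTop (by positivity))
  obtain ⟨r, hr, hrC⟩ := ((eventually_ge_atTop 1).and (hlog.eventually_gt_atTop C)).exists
  linarith [add_log_le_growthFun_one hκ hn hr, hC r (one_pos.trans_le hr)]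

lemma growthFun_le_integral (hδ : 1 < δ) (hκ : 0 < κ) (hn : 0 < n) (hr : 0 < r) :
    growthFun δ κ n r
      ≤ (κ * n) ^ (1 / δ) / (2 * κ) * ∫ v in Ioi 0, v ^ (δ - 2) / (v ^ δ + 1) :=
  mul_le_mul_of_nonneg_left (setIntegral_mono_set (integrableOn_integrand_Ioi_zero hδ)
    ((ae_restrict_mem measurableSet_Ioi).mono fun _ hv => (integrand_pos hv).le)
    (Ioi_subset_Ioi (by positivity)).eventuallyLE) (by positivity)

lemma exists_bound_growthFun_iff (hδ : 1 ≤ δ) (hκ : 0 < κ) (hn : 0 < n) :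
    (∃ C, ∀ r, 0 < r → growthFun δ κ n r ≤ C) ↔ 1 < δ := by
  refine ⟨fun hbdd => hδ.lt_of_ne ?_,
    fun hδ1 => ⟨_, fun r hr => growthFun_le_integral hδ1 hκ hn hr⟩⟩
  rintro rfl
  exact not_exists_bound_growthFun_one hκ hn hbdd

lemma integrableOn_growthFun_sq_div_sq (hδ : 1 ≤ δ) (hκ : 0 < κ) (hn : 0 < n) :
    IntegrableOn (fun s => growthFun δ κ n (s ^ 2) / s ^ 2) (Ioi 0) := by
  have hcont : ContinuousOn (growthFun δ κ n) (Ioi 0) := fun r hr =>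
    (hasDerivAt_growthFun (one_pos.trans_le hδ) hκ hn hr).continuousAt.continuousWithinAt
  have hnorm : ∀ s ∈ Ioi (0 : ℝ),
      ‖growthFun δ κ n (s ^ 2) / s ^ 2‖ = growthFun δ κ n (s ^ 2) / s ^ 2 :=
    fun s hs => norm_of_nonneg (div_nonneg (growthFun_pos hκ hn (pow_pos hs 2)).le (sq_nonneg s))
  refine integrableOn_Ioi_zero_of_le (p := -3 / 2) (C₀ := 1 / (2 * κ))
    (C₁ := growthFun δ κ n 1 + 2 * n) (by norm_num)
    ((hcont.comp (continuousOn_pow 2) fun s hs => pow_pos hs 2).div (continuousOn_pow 2)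
      fun s hs => pow_ne_zero 2 (ne_of_gt hs)) (fun s hs => ?_) (fun s hs => ?_)
  · have hs0 : 0 < s := hs.1
    rw [hnorm s hs0, div_le_iff₀ (by positivity)]
    exact (growthFun_le_div hκ hn (pow_pos hs0 2)).trans_eq (by ring)
  · have hs1 : 1 < s := hs
    have hs0 : 0 < s := one_pos.trans hs1
    rw [hnorm s hs0, div_le_iff₀ (by positivity), mul_assoc, ← rpow_natCast s 2,
      ← rpow_add hs0]
    have hlog : log s ≤ 2 * s ^ (1 / 2 : ℝ) := by
      linarith [log_le_rpow_div hs0.le (by norm_num : (0 : ℝ) < 1 / 2)]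
    have hone : 1 ≤ s ^ (1 / 2 : ℝ) := one_le_rpow hs1.le (by norm_num)
    have hgrowth := growthFun_le_add_log hδ hκ hn (one_le_pow₀ hs1.le : 1 ≤ s ^ 2)
    rw [log_pow] at hgrowth
    norm_num
    nlinarith [growthFun_pos (δ := δ) hκ hn one_pos]

lemma integral_eq_growthFun (hδ : 0 < δ) (hκ : 0 < κ) (hn : 0 < n) (hr : 0 < r) :
    IntegrableOn (fun t : ℝ =>
        (κ * n / (exp (2 * δ * κ * t) * (1 + κ * n / r ^ δ) - 1)) ^ (1 / δ)) (Ioi 0) ∧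
      ∫ t in Ioi (0 : ℝ), (κ * n / (exp (2 * δ * κ * t) * (1 + κ * n / r ^ δ) - 1)) ^ (1 / δ)
        = growthFun δ κ n r := by
  have hlower : κ * n / r ^ δ = ((κ * n) ^ (1 / δ) / r) ^ δ := by
    rw [div_rpow (by positivity) hr.le, one_div, rpow_inv_rpow (by positivity) hδ.ne']
  have hconst : (κ * n) ^ (1 / δ) * δ / (2 * δ * κ) = (κ * n) ^ (1 / δ) / (2 * κ) := by
    field_simp
  obtain ⟨hint, heq⟩ := integral_rpow_div_exp_mul_sub_one (μ := 2 * δ * κ) hδ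
    (by positivity) (mul_pos hκ hn).le (by positivity : 0 < (κ * n) ^ (1 / δ) / r)
  rw [hlower]
  exact ⟨hint, heq.trans (by rw [hconst]; rfl)⟩

end GrowthFunction

theorem stmt_1 (δ κ n : ℝ) (hδ : 1 ≤ δ) (hκ : 0 < κ) (hn : 0 < n)
    (Φ : ℝ → ℝ)
    (hΦ : ∀ r : ℝ, Φ r = ((κ * n) ^ (1/δ) / (2 * κ)) *
        ∫ v in Ioi ((κ * n) ^ (1/δ) / r), v ^ (δ - 2) / (v ^ δ + 1)) :
    (∀ r : ℝ, 0 < r → IntegrableOn (fun v : ℝ => v ^ (δ - 2) / (v ^ δ + 1))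
        (Ioi ((κ * n) ^ (1/δ) / r)))
    ∧ (∀ r : ℝ, 0 < r → 0 < Φ r)
    ∧ (∀ r : ℝ, 0 < r → HasDerivAt Φ (n / (2 * (κ * n + r ^ δ))) r)
    ∧ StrictMonoOn Φ (Ioi 0)
    ∧ ConcaveOn ℝ (Ioi 0) Φ
    ∧ ((∃ C : ℝ, ∀ r : ℝ, 0 < r → Φ r ≤ C) ↔ 1 < δ)
    ∧ IntegrableOn (fun s : ℝ => Φ (s ^ 2) / s ^ 2) (Ioi 0)
    ∧ (∀ r : ℝ, 0 < r →
        IntegrableOn (fun t : ℝ =>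
          (κ * n / (Real.exp (2 * δ * κ * t) * (1 + κ * n / r ^ δ) - 1)) ^ (1/δ)) (Ioi 0)
        ∧ (∫ t in Ioi (0:ℝ),
            (κ * n / (Real.exp (2 * δ * κ * t) * (1 + κ * n / r ^ δ) - 1)) ^ (1/δ)) = Φ r) := by
  obtain rfl : Φ = growthFun δ κ n := funext hΦ
  have hδ0 : 0 < δ := one_pos.trans_le hδ
  exact ⟨fun r hr => integrableOn_integrand_Ioi (by positivity),
    fun r hr => growthFun_pos hκ hn hr,
    fun r hr => hasDerivAt_growthFun hδ0 hκ hn hr,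
    strictMonoOn_growthFun hδ0 hκ hn,
    concaveOn_growthFun hδ0 hκ hn,
    exists_bound_growthFun_iff hδ hκ hn,
    integrableOn_growthFun_sq_div_sq hδ hκ hn,
    fun r hr => integral_eq_growthFun hδ0 hκ hn hr⟩
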